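/- A power of a cycle C_n^k with n ≥ 3k + 2 and k ≥ 1 has biclique-chromatic number 2 if, and only if, there exist natural numbers a and b such that n = a·k + b·(k + 1) and a + b ≥ 2 is even. -/

import Mathlib

open SimpleGraph

/-- The `k`-th power of a path on `n` vertices: `v_i ~ v_j` iff `0 < |i - j| ≤ k`. -/
def pathPower (n k : ℕ) : SimpleGraph (Fin n) :=
  SimpleGraph.fromRel (fun i j => i.val ≤ j.val ∧ j.val ≤ i.val + k)

/-- The cyclic distance between two vertices of `ZMod n`. -/
def cdist (n : ℕ) (i j : ZMod n) : ℕ := min (i - j).val (j - i).val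

/-- The `k`-th power of a cycle on `n` vertices: `v_i ~ v_j` iff the
cyclic distance between `i` and `j` is between `1` and `k`. -/
def cyclePower (n k : ℕ) : SimpleGraph (ZMod n) :=
  SimpleGraph.fromRel (fun i j => cdist n i j ≤ k)

/-- `S` induces a complete bipartite subgraph of `G`. -/
def IsCompleteBipartiteSet {V : Type*} (G : SimpleGraph V) (S : Set V) : Prop :=
  ∃ A B : Set V, A ∪ B = S ∧ Disjoint A B ∧
    (∀ a ∈ A, ∀ b ∈ B, G.Adj a b) ∧
    (∀ a ∈ A, ∀ a' ∈ A, ¬ G.Adj a a') ∧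
    (∀ b ∈ B, ∀ b' ∈ B, ¬ G.Adj b b')

/-- A biclique: a maximal set of vertices inducing a complete bipartite
subgraph with at least one edge. -/
def IsBiclique {V : Type*} (G : SimpleGraph V) (S : Set V) : Prop :=
  IsCompleteBipartiteSet G S ∧ (∃ u ∈ S, ∃ v ∈ S, G.Adj u v) ∧
  ∀ T : Set V, S ⊆ T → IsCompleteBipartiteSet G T → T = S

/-- A set is monochromatic under a colouring. -/
def Monochromatic {V α : Type*} (c : V → α) (S : Set V) : Prop :=
  ∃ a, ∀ v ∈ S, c v = a

/-- `G` admits a biclique-colouring with `m` colours. -/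
def BicliqueColorable {V : Type*} (G : SimpleGraph V) (m : ℕ) : Prop :=
  ∃ c : V → Fin m, ∀ S : Set V, IsBiclique G S → ¬ Monochromatic c S

/-- The biclique-chromatic number. -/
noncomputable def bicliqueChromaticNumber {V : Type*} (G : SimpleGraph V) : ℕ :=
  sInf {m | BicliqueColorable G m}

/-- `a`, `b`, `c` induce a path on three vertices (with middle vertex `b`). -/
def IsInducedP3 {V : Type*} (G : SimpleGraph V) (a b c : V) : Prop :=
  a ≠ b ∧ b ≠ c ∧ a ≠ c ∧ G.Adj a b ∧ G.Adj b c ∧ ¬ G.Adj a c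

/-- `a`, `b`, `c`, `d` induce a four-cycle (in this cyclic order). -/
def IsInducedC4 {V : Type*} (G : SimpleGraph V) (a b c d : V) : Prop :=
  a ≠ b ∧ a ≠ c ∧ a ≠ d ∧ b ≠ c ∧ b ≠ d ∧ c ≠ d ∧
  G.Adj a b ∧ G.Adj b c ∧ G.Adj c d ∧ G.Adj d a ∧ ¬ G.Adj a c ∧ ¬ G.Adj b d

/-!
Call `y` a boundary of a colouring `c` of `ZMod n` if `c (y + 1) ≠ c y`. In a biclique
2-colouring of `C_n^k`, the `P_3` `{x, x + 1, x + k + 1}` puts a boundary in every window of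
`k + 1` consecutive vertices. Two boundaries at distance less than `k` are impossible: such a
short run forces, through the `P_3` of reach `k + 1` centred at the first vertex of the next run,
a short next run, so all runs are short; then `c (x + k + 1) ≠ c x` for all `x`, since equality
would make `x + 1, …, x + k` a run. This contradicts a `P_3` of reach `k + 2` when `n ≥ 3k + 3`;
when `n = 3k + 2` it gives `c` the period `k` and makes `c` alternate, which the induced `C_4`
`{x, x + 2, x + k + 2, x + 2k + 2}` (`k` even) or the odd period (`k` odd) rules out. Counting
boundaries in windows, their number `m` is even with `m k ≤ n ≤ m (k + 1)`.

Conversely, for such `m` colour `x` by the parity of `⌊x m / n⌋`: the blocks of this colouring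
have `k` or `k + 1` consecutive vertices and `m` is even, so two adjacent vertices of the same
colour lie in one block. A monochromatic biclique then lies in one block, hence is a clique,
hence a single edge; but an edge `{x, x + d}` always extends to the `P_3`
`{x, x + d, x + k + 1}`.
-/

open Finset

section Biclique
variable {V : Type*} {G : SimpleGraph V}

def IsBicliqueColoring {α : Type*} (G : SimpleGraph V) (c : V → α) : Prop :=
  ∀ S : Set V, IsBiclique G S → ¬ Monochromatic c S

lemma IsCompleteBipartiteSet.adj_iff_not_adj {T : Set V} (hT : IsCompleteBipartiteSet G T)
    {w x y : V} (hw : w ∈ T) (hx : x ∈ T) (hy : y ∈ T) (hxy : G.Adj x y) :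
    G.Adj w x ↔ ¬ G.Adj w y := by
  obtain ⟨A, B, rfl, hAB, hadj, hA, hB⟩ := hT
  have side : ∀ u ∈ A ∪ B, ∀ v ∈ A ∪ B, G.Adj u v ↔ (u ∈ A ↔ v ∉ A) := by
    have hBA : ∀ z ∈ B, z ∉ A := fun z hzB hzA => hAB.ne_of_mem hzA hzB rfl
    rintro u (hu | hu) v (hv | hv)
    · simp [hA u hu v hv, hu, hv]
    · simp [hadj u hu v hv, hu, hBA v hv]
    · simp [(hadj v hv u hu).symm, hBA u hu, hv]
    · simp [hB u hu v hv, hBA u hu, hBA v hv]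
  rw [side w hw x hx, side w hw y hy]
  have := (side x hx y hy).1 hxy
  tauto

lemma IsCompleteBipartiteSet.isBiclique {S : Set V} (hS : IsCompleteBipartiteSet G S)
    (hedge : ∃ u ∈ S, ∃ v ∈ S, G.Adj u v)
    (hmax : ∀ w, (∀ x ∈ S, ∀ y ∈ S, G.Adj x y → (G.Adj w x ↔ ¬ G.Adj w y)) → w ∈ S) :
    IsBiclique G S :=
  ⟨hS, hedge, fun _ hST hT => Set.Subset.antisymm (fun w hw => hmax w fun _ hx _ hy hxy =>
    hT.adj_iff_not_adj hw (hST hx) (hST hy) hxy) hST⟩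

lemma IsInducedP3.isCompleteBipartiteSet {x y z : V} (h : IsInducedP3 G x y z) :
    IsCompleteBipartiteSet G {x, y, z} := by
  obtain ⟨hxy', hyz', -, hxy, hyz, hxz⟩ := h
  refine ⟨{x, z}, {y}, ?_, ?_, ?_, ?_, ?_⟩
  · ext; simp only [Set.mem_union, Set.mem_insert_iff, Set.mem_singleton_iff]; tauto
  · simpa using ⟨hxy'.symm, hyz'⟩
  · simp [hxy, hyz.symm]
  · simp [hxz, G.adj_comm z x]
  · simp

lemma IsInducedC4.isCompleteBipartiteSet {a b c d : V} (h : IsInducedC4 G a b c d) :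
    IsCompleteBipartiteSet G {a, b, c, d} := by
  obtain ⟨hab', -, had', hbc', -, hcd', hab, hbc, hcd, hda, hac, hbd⟩ := h
  refine ⟨{a, c}, {b, d}, ?_, ?_, ?_, ?_, ?_⟩
  · ext; simp only [Set.mem_union, Set.mem_insert_iff, Set.mem_singleton_iff]; tauto
  · simpa using ⟨⟨hab'.symm, hbc'⟩, had'.symm, hcd'.symm⟩
  · simp [hab, hda.symm, hbc.symm, hcd]
  · simp [hac, G.adj_comm c a]
  · simp [hbd, G.adj_comm d b]

lemma IsCompleteBipartiteSet.eq_pair_of_isClique {S : Set V} (hS : IsCompleteBipartiteSet G S)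
    (hclq : G.IsClique S) {u v : V} (hu : u ∈ S) (hv : v ∈ S) (huv : G.Adj u v) :
    S = {u, v} := by
  refine Set.Subset.antisymm (fun w hw => ?_) (by simp [Set.insert_subset_iff, hu, hv])
  have := hS.adj_iff_not_adj hw hu hv huv
  by_contra hne
  simp only [Set.mem_insert_iff, Set.mem_singleton_iff, not_or] at hne
  exact (this.1 (hclq hw hu hne.1)) (hclq hw hv hne.2)

lemma not_bicliqueColorable_one {S : Set V} (hS : IsBiclique G S) : ¬ BicliqueColorable G 1 :=
  fun ⟨_, hc⟩ => hc S hS ⟨0, fun _ _ => Subsingleton.elim _ _⟩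

lemma bicliqueChromaticNumber_eq_two_iff [Nonempty V] (h1 : ¬ BicliqueColorable G 1) :
    bicliqueChromaticNumber G = 2 ↔ BicliqueColorable G 2 := by
  have h0 : ¬ BicliqueColorable G 0 := fun ⟨c, _⟩ => (c (Classical.arbitrary V)).elim0
  unfold bicliqueChromaticNumber
  constructor
  · intro h2
    have hne : {m | BicliqueColorable G m}.Nonempty := by
      by_contra hempty
      rw [Set.not_nonempty_iff_eq_empty] at hempty
      simp [hempty] at h2
    simpa [← h2] using Nat.sInf_mem hne
  · intro h2
    refine le_antisymm (Nat.sInf_le h2) (le_csInf ⟨2, h2⟩ fun m hm => ?_)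
    by_contra! hlt
    interval_cases m
    exacts [h0 hm, h1 hm]

end Biclique

namespace ZMod

lemma add_natCast_add_natCast {n : ℕ} (x : ZMod n) (a b : ℕ) : x + a + b = x + (a + b : ℕ) := by
  push_cast; ring

lemma val_natCast_sub_natCast {n a b : ℕ} (ha : a < n) (hb : b < n) :
    ((a : ZMod n) - b).val = if b ≤ a then a - b else n + a - b := by
  split_ifs with hba
  · rw [← Nat.cast_sub hba, val_natCast_of_lt (by omega)]
  · have : (a : ZMod n) - b = ((n + a - b : ℕ) : ZMod n) := by
      rw [Nat.cast_sub (by omega)]; push_cast; rw [natCast_self, zero_add]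
    rw [this, val_natCast_of_lt (by omega)]

lemma natCast_eq_natCast_iff_of_lt {n a b : ℕ} (ha : a < n) (hb : b < n) :
    (a : ZMod n) = b ↔ a = b := by
  rw [natCast_eq_natCast_iff', Nat.mod_eq_of_lt ha, Nat.mod_eq_of_lt hb]

lemma add_natCast_eq_add_natCast_iff {n a b : ℕ} (x : ZMod n) (ha : a < n) (hb : b < n) :
    x + a = x + b ↔ a = b := by
  rw [add_right_inj, natCast_eq_natCast_iff_of_lt ha hb]

lemma exists_eq_add_natCast {n : ℕ} [NeZero n] (x w : ZMod n) : ∃ e < n, w = x + e :=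
  ⟨(w - x).val, val_lt _, by rw [natCast_val, cast_id]; ring⟩

end ZMod

section CyclePower
variable {n k : ℕ}

lemma cyclePower_adj_add_natCast_iff (x : ZMod n) {a b : ℕ} (ha : a < n) (hb : b < n) :
    (cyclePower n k).Adj (x + a) (x + b) ↔
      a ≠ b ∧ (a ≤ b + k ∧ b ≤ a + k ∨ n + a ≤ b + k ∨ n + b ≤ a + k) := by
  have hsub : ∀ a b : ℕ, x + a - (x + b) = (a : ZMod n) - b := fun _ _ => by ring
  simp only [cyclePower, fromRel_adj, ne_eq, add_right_inj, cdist, hsub,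
    ZMod.natCast_eq_natCast_iff_of_lt ha hb, ZMod.val_natCast_sub_natCast ha hb,
    ZMod.val_natCast_sub_natCast hb ha]
  split_ifs <;> omega

lemma cyclePower_isBiclique_p3 (x : ZMod n) {s d : ℕ} (hs : s ≤ k) (hds : d ≤ s + k)
    (hd : k + 1 ≤ d) (hdn : d + 2 * k + 1 ≤ n) :
    IsBiclique (cyclePower n k) {x, x + s, x + d} := by
  have adj {a b : ℕ} (ha : a < n) (hb : b < n) := cyclePower_adj_add_natCast_iff (k := k) x ha hb
  have h0 : 0 < n := by omega
  have : NeZero n := ⟨h0.ne'⟩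
  have hsn : s < n := by omega
  have hdn' : d < n := by omega
  suffices h : IsBiclique (cyclePower n k) {x + (0 : ℕ), x + s, x + d} by simpa using h
  have hP3 : IsInducedP3 (cyclePower n k) (x + (0 : ℕ)) (x + s) (x + d) := by
    refine ⟨?_, ?_, ?_, (adj h0 hsn).2 (by omega), (adj hsn hdn').2 (by omega),
      by rw [adj h0 hdn']; omega⟩ <;>
    rw [ne_eq, ZMod.add_natCast_eq_add_natCast_iff x (by omega) (by omega)] <;> omega
  refine hP3.isCompleteBipartiteSet.isBiclique ⟨_, by simp, _, by simp, hP3.2.2.2.1⟩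
    fun w hw => ?_
  obtain ⟨e, he, rfl⟩ := ZMod.exists_eq_add_natCast x w
  have h1 := hw _ (by simp) _ (by simp) hP3.2.2.2.1
  have h2 := hw _ (by simp) _ (by simp) hP3.2.2.2.2.1.symm
  rw [adj he h0, adj he hsn] at h1
  rw [adj he hdn', adj he hsn] at h2
  obtain rfl | rfl | rfl : e = 0 ∨ e = s ∨ e = d := by omega
  all_goals simp

lemma cyclePower_isBiclique_c4 (hk : 2 ≤ k) (hn : n = 3 * k + 2) (x : ZMod n) :
    IsBiclique (cyclePower n k) {x, x + (2 : ℕ), x + (k + 2 : ℕ), x + (2 * k + 2 : ℕ)} := by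
  have adj {a b : ℕ} (ha : a < n) (hb : b < n) := cyclePower_adj_add_natCast_iff (k := k) x ha hb
  have h0 : 0 < n := by omega
  have : NeZero n := ⟨h0.ne'⟩
  have h2 : 2 < n := by omega
  have h3 : k + 2 < n := by omega
  have h4 : 2 * k + 2 < n := by omega
  suffices h : IsBiclique (cyclePower n k)
      {x + (0 : ℕ), x + (2 : ℕ), x + (k + 2 : ℕ), x + (2 * k + 2 : ℕ)} by simpa using h
  have hC4 : IsInducedC4 (cyclePower n k) (x + (0 : ℕ)) (x + (2 : ℕ)) (x + (k + 2 : ℕ))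
      (x + (2 * k + 2 : ℕ)) := by
    refine ⟨?_, ?_, ?_, ?_, ?_, ?_, (adj h0 h2).2 (by omega), (adj h2 h3).2 (by omega),
      (adj h3 h4).2 (by omega), (adj h4 h0).2 (by omega), by rw [adj h0 h3]; omega,
      by rw [adj h2 h4]; omega⟩ <;>
    rw [ne_eq, ZMod.add_natCast_eq_add_natCast_iff x (by omega) (by omega)] <;> omega
  obtain ⟨-, -, -, -, -, -, hab, hbc, hcd, -, -, -⟩ := id hC4
  refine hC4.isCompleteBipartiteSet.isBiclique ⟨_, by simp, _, by simp, hab⟩ fun w hw => ?_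
  obtain ⟨e, he, rfl⟩ := ZMod.exists_eq_add_natCast x w
  have e1 := hw _ (by simp) _ (by simp) hab
  have e2 := hw _ (by simp) _ (by simp) hbc.symm
  have e3 := hw _ (by simp) _ (by simp) hcd
  rw [adj he h0, adj he h2] at e1
  rw [adj he h3, adj he h2] at e2
  rw [adj he h3, adj he h4] at e3
  obtain rfl | rfl | rfl | rfl : e = 0 ∨ e = 2 ∨ e = k + 2 ∨ e = 2 * k + 2 := by omega
  all_goals simp

variable [NeZero n]

lemma cyclePower_adj_iff_val {u v : ZMod n} :
    (cyclePower n k).Adj u v ↔ u.val ≠ v.val ∧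
      (u.val ≤ v.val + k ∧ v.val ≤ u.val + k ∨ n + u.val ≤ v.val + k ∨ n + v.val ≤ u.val + k) := by
  simpa using cyclePower_adj_add_natCast_iff (k := k) 0 u.val_lt v.val_lt

lemma cyclePower_adj_self_add_natCast_iff (x : ZMod n) {b : ℕ} (hb : b < n) :
    (cyclePower n k).Adj x (x + b) ↔ 0 < b ∧ (b ≤ k ∨ n ≤ b + k) := by
  have := cyclePower_adj_add_natCast_iff (k := k) x (NeZero.pos n) hb
  simp only [Nat.cast_zero, add_zero] at this
  rw [this]
  omega

lemma cyclePower_not_isBiclique_pair (hn : 3 * k + 2 ≤ n) {u v : ZMod n}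
    (huv : (cyclePower n k).Adj u v) : ¬ IsBiclique (cyclePower n k) {u, v} := by
  suffices h : ∀ (x : ZMod n) (d : ℕ), 0 < d → d ≤ k → ¬ IsBiclique (cyclePower n k) {x, x + d} by
    obtain ⟨e, he, rfl⟩ := ZMod.exists_eq_add_natCast u v
    rcases (cyclePower_adj_self_add_natCast_iff u he).1 huv with ⟨he0, hek | hek⟩
    · exact h u e he0 hek
    · have hu : u = u + e + (n - e : ℕ) := by
        rw [Nat.cast_sub he.le, ZMod.natCast_self]; ring
      rw [Set.pair_comm]
      nth_rewrite 2 [hu]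
      exact h _ _ (by omega) (by omega)
  intro x d hd0 hdk hpair
  have hP3 : IsBiclique (cyclePower n k) {x + (0 : ℕ), x + d, x + (k + 1 : ℕ)} := by
    simpa using cyclePower_isBiclique_p3 x (d := k + 1) hdk (by omega) le_rfl (by omega)
  replace hpair : IsBiclique (cyclePower n k) {x + (0 : ℕ), x + d} := by simpa using hpair
  have hmem : x + ((k + 1 : ℕ) : ZMod n) ∈ ({x + (0 : ℕ), x + d} : Set (ZMod n)) :=
    hpair.2.2 _ (Set.insert_subset_insert (Set.singleton_subset_iff.2 (Set.mem_insert _ _)))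
      hP3.1 ▸ by simp
  simp only [Set.mem_insert_iff, Set.mem_singleton_iff] at hmem
  rcases hmem with h | h <;>
    rw [ZMod.add_natCast_eq_add_natCast_iff x (by omega) (by omega)] at h <;> omega

end CyclePower

section Boundary
variable {n : ℕ} {α : Type*}

def IsBoundary (c : ZMod n → α) (y : ZMod n) : Prop := c (y + 1) ≠ c y

instance [DecidableEq α] (c : ZMod n → α) : DecidablePred (IsBoundary c) :=
  fun _ => inferInstanceAs (Decidable (_ ≠ _))

lemma apply_add_natCast_eq_of_forall_not_isBoundary {c : ZMod n → α} (x : ZMod n) {a b : ℕ}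
    (hab : a ≤ b) (h : ∀ j, a ≤ j → j < b → ¬ IsBoundary c (x + j)) : c (x + b) = c (x + a) := by
  induction b, hab using Nat.le_induction with
  | base => rfl
  | succ b hab ih =>
    rw [← ih fun j hj hjb => h j hj (by omega), ← not_ne_iff]
    simpa [IsBoundary, add_assoc] using h b hab (by omega)

lemma exists_isBoundary_of_apply_add_natCast_ne {c : ZMod n → α} (x : ZMod n) {a b : ℕ}
    (hab : a ≤ b) (hne : c (x + b) ≠ c (x + a)) : ∃ j, a ≤ j ∧ j < b ∧ IsBoundary c (x + j) := by
  by_contra! h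
  exact hne (apply_add_natCast_eq_of_forall_not_isBoundary x hab h)

lemma even_card_isBoundary [NeZero n] (c : ZMod n → Fin 2) : Even #{y | IsBoundary c y} := by
  have hdiff : ∀ a b : Fin 2, ((a : ℕ) : ZMod 2) - (b : ℕ) = if a ≠ b then 1 else 0 := by decide
  have hsum : ∑ y : ZMod n, (((c (y + 1) : ℕ) : ZMod 2) - (c y : ℕ)) = 0 := by
    rw [sum_sub_distrib, sub_eq_zero]
    exact Fintype.sum_equiv (Equiv.addRight 1) _ _ fun _ => rfl
  simp only [hdiff, sum_boole] at hsum
  exact even_iff_two_dvd.mpr ((ZMod.natCast_eq_zero_iff _ 2).mp hsum)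

lemma apply_add_natCast_two_mul_eq {c : ZMod n → Fin 2} (halt : ∀ x, IsBoundary c x)
    (x : ZMod n) (j : ℕ) : c (x + (2 * j : ℕ)) = c x := by
  have h2 (x : ZMod n) : c (x + 2) = c x := by
    have h1 := halt x
    have h2 := halt (x + 1)
    rw [IsBoundary, add_assoc, one_add_one_eq_two] at h2
    unfold IsBoundary at h1
    omega
  induction j with
  | zero => simp
  | succ j ih => rw [show x + (2 * (j + 1) : ℕ) = x + (2 * j : ℕ) + 2 by push_cast; ring, h2, ih]

end Boundary

lemma Finset.sum_card_filter_add_mem {G ι : Type*} [AddCommGroup G] [Fintype G] [DecidableEq G]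
    (B : Finset G) (s : Finset ι) (f : ι → G) :
    ∑ x, #{j ∈ s | x + f j ∈ B} = #s * #B := by
  simp only [card_filter]
  rw [sum_comm]
  have (j : ι) : ∑ x, (if x + f j ∈ B then 1 else 0) = #B := by
    rw [Fintype.sum_equiv (Equiv.addRight (f j)) (fun x => if x + f j ∈ B then 1 else 0)
      (fun x => if x ∈ B then 1 else 0) fun _ => rfl]
    simp
  simp [this]

section BicliqueColoring
variable {n k : ℕ}

lemma IsBicliqueColoring.apply_add_natCast_ne {α : Type*} {c : ZMod n → α}
    (hc : IsBicliqueColoring (cyclePower n k) c) (x : ZMod n) {s d : ℕ} (hs : s ≤ k)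
    (hds : d ≤ s + k) (hd : k + 1 ≤ d) (hdn : d + 2 * k + 1 ≤ n) (hcd : c (x + d) = c x) :
    c (x + s) ≠ c x := fun hcs =>
  hc _ (cyclePower_isBiclique_p3 x hs hds hd hdn)
    ⟨c x, by rintro _ (rfl | rfl | rfl); exacts [rfl, hcs, hcd]⟩

def HasNearbyBoundary (c : ZMod n → Fin 2) (k : ℕ) (y : ZMod n) : Prop :=
  ∃ r, 0 < r ∧ r < k ∧ IsBoundary c (y + r)

variable {c : ZMod n → Fin 2} (hc : IsBicliqueColoring (cyclePower n k) c)
include hc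

lemma IsBicliqueColoring.exists_isBoundary_le (hn : 3 * k + 2 ≤ n) (hk : 1 ≤ k) (x : ZMod n) :
    ∃ j ≤ k, IsBoundary c (x + j) := by
  by_contra! h
  have hconst {b : ℕ} (hb : b ≤ k + 1) : c (x + b) = c x := by
    simpa using apply_add_natCast_eq_of_forall_not_isBoundary x (Nat.zero_le b)
      fun j _ hj => h j (by omega)
  exact hc.apply_add_natCast_ne x (s := 1) (d := k + 1) hk (by omega) le_rfl (by omega)
    (hconst le_rfl) (by simpa using hconst (b := 1) (by omega))

lemma IsBicliqueColoring.hasNearbyBoundary_of_isBoundary_of_isBoundary (hn : 3 * k + 2 ≤ n)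
    {x : ZMod n} {r : ℕ} (hx : IsBoundary c x) (hr : IsBoundary c (x + r)) (hr0 : 0 < r)
    (hrk : r < k) (hgap : ∀ j, 0 < j → j < r → ¬ IsBoundary c (x + j)) :
    HasNearbyBoundary c k (x + r) := by
  have hrun : c (x + r) = c (x + (1 : ℕ)) :=
    apply_add_natCast_eq_of_forall_not_isBoundary x hr0 fun j hj hjr => hgap j hj hjr
  have hnext : c (x + (r + 1 : ℕ)) = c x := by
    simp only [IsBoundary, Nat.cast_one] at hx hr hrun
    push_cast; rw [← add_assoc]; omega
  have hfar : c (x + (k + 1 : ℕ)) ≠ c (x + (r + 1 : ℕ)) := fun h =>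
    hc.apply_add_natCast_ne x (by omega) (by omega) le_rfl (by omega) (h.trans hnext) hnext
  obtain ⟨j, hj1, hj2, hj⟩ := exists_isBoundary_of_apply_add_natCast_ne x (by omega) hfar
  refine ⟨j - r, by omega, by omega, ?_⟩
  rwa [ZMod.add_natCast_add_natCast, Nat.add_sub_cancel' (by omega)]

lemma IsBicliqueColoring.apply_add_natCast_ne_of_forall_hasNearbyBoundary
    (hn : 3 * k + 2 ≤ n) (hk : 1 ≤ k) (hall : ∀ y, IsBoundary c y → HasNearbyBoundary c k y)
    (x : ZMod n) :
    c (x + (k + 1 : ℕ)) ≠ c x := by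
  intro hcd
  have hmid {s : ℕ} (hs0 : 0 < s) (hs : s ≤ k) : c (x + s) ≠ c x :=
    hc.apply_add_natCast_ne x hs (by omega) le_rfl (by omega) hcd
  have hx : IsBoundary c x := by simpa [IsBoundary] using hmid one_pos (by omega)
  obtain ⟨r, hr0, hrk, hr⟩ := hall x hx
  have h1 := hmid hr0 hrk.le
  have h2 := hmid (s := r + 1) (by omega) hrk
  push_cast at h2
  exact hr (by rw [← add_assoc] at h2; omega)

lemma IsBicliqueColoring.forall_hasNearbyBoundary [NeZero n] (hn : 3 * k + 2 ≤ n)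
    {x : ZMod n} (hx : IsBoundary c x) (hxk : HasNearbyBoundary c k x) :
    ∀ y, IsBoundary c y → HasNearbyBoundary c k y := by
  -- Walk around the cycle from `x`, keeping track of the last boundary met.
  have last (t : ℕ) : ∃ t₀ ≤ t, IsBoundary c (x + t₀) ∧ HasNearbyBoundary c k (x + t₀) ∧
      ∀ j, t₀ < j → j ≤ t → ¬ IsBoundary c (x + j) := by
    induction t with
    | zero => exact ⟨0, le_rfl, by simpa using hx, by simpa using hxk, by omega⟩
    | succ t ih =>
      obtain ⟨t₀, ht₀, hb₀, ⟨s, hs0, hsk, hs⟩, hgap⟩ := ih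
      by_cases hb : IsBoundary c (x + (t + 1 : ℕ))
      · refine ⟨t + 1, le_rfl, hb, ?_, by omega⟩
        have hst : t + 1 ≤ t₀ + s := by
          by_contra
          exact hgap (t₀ + s) (by omega) (by omega) (by rwa [← ZMod.add_natCast_add_natCast])
        have hr : t₀ + (t + 1 - t₀) = t + 1 := by omega
        have := hc.hasNearbyBoundary_of_isBoundary_of_isBoundary hn hb₀ (r := t + 1 - t₀)
          (by rwa [ZMod.add_natCast_add_natCast, hr]) (by omega) (by omega)
          fun j hj hjr => by
            rw [ZMod.add_natCast_add_natCast]; exact hgap (t₀ + j) (by omega) (by omega)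
        rwa [ZMod.add_natCast_add_natCast, hr] at this
      · refine ⟨t₀, by omega, hb₀, ⟨s, hs0, hsk, hs⟩, fun j hj hjt => ?_⟩
        rcases Nat.lt_or_eq_of_le hjt with hjt | rfl
        exacts [hgap j hj (by omega), hb]
  intro y hy
  obtain ⟨e, -, rfl⟩ := ZMod.exists_eq_add_natCast x y
  obtain ⟨t₀, ht₀, -, hnear, hgap⟩ := last e
  obtain rfl : t₀ = e := by
    by_contra
    exact hgap e (by omega) le_rfl hy
  exact hnear

lemma IsBicliqueColoring.not_hasNearbyBoundary_of_forall_apply_add_natCast_ne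
    (hn : 3 * k + 2 < n)
    (hanti : ∀ x, c (x + (k + 1 : ℕ)) ≠ c x) (y : ZMod n) (hy : IsBoundary c y) :
    ¬ HasNearbyBoundary c k y := by
  rintro ⟨r, hr0, hrk, hr⟩
  have hfar : c (y + (k + 2 : ℕ)) = c y := by
    have := hanti (y + 1)
    simp only [IsBoundary] at hy
    push_cast at this ⊢
    rw [show y + 1 + (k + 1) = y + (k + 2) by ring] at this
    omega
  have hmid {s : ℕ} (hs0 : 0 < s) (hs : s ≤ k + 1) : c (y + s) ≠ c y := by
    rcases (by omega : s = 1 ∨ 2 ≤ s ∧ s ≤ k ∨ s = k + 1) with rfl | hs | rfl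
    · simpa [IsBoundary] using hy
    · exact hc.apply_add_natCast_ne y hs.2 (by omega) (by omega) (by omega) hfar
    · exact hanti y
  have h1 := hmid hr0 (by omega)
  have h2 := hmid (s := r + 1) (by omega) (by omega)
  push_cast at h2
  exact hr (by rw [← add_assoc] at h2; omega)

lemma IsBicliqueColoring.exists_apply_add_natCast_eq
    (hk : 1 ≤ k) (hn : n = 3 * k + 2) :
    ∃ x, c (x + (k + 1 : ℕ)) = c x := by
  by_contra! hanti
  have hper (x : ZMod n) : c (x + k) = c x := by
    have h1 := hanti (x + k)
    have h2 := hanti (x + k + (k + 1 : ℕ))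
    have hwrap : x + k + (k + 1 : ℕ) + (k + 1 : ℕ) = x := by
      have : ((3 * k + 2 : ℕ) : ZMod n) = 0 := by rw [← hn, ZMod.natCast_self]
      push_cast at this ⊢
      linear_combination this
    rw [hwrap] at h2
    omega
  have halt (x : ZMod n) : IsBoundary c x := by
    have := hanti x
    rwa [show x + (k + 1 : ℕ) = x + 1 + k by push_cast; ring, hper] at this
  have h2per := apply_add_natCast_two_mul_eq halt
  rcases Nat.even_or_odd' k with ⟨j, rfl | rfl⟩
  · refine hc _ (cyclePower_isBiclique_c4 (by omega) hn 0) ⟨c 0, ?_⟩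
    rintro _ (rfl | rfl | rfl | rfl)
    · rfl
    · simpa using h2per 0 1
    · simpa [show 2 * j + 2 = 2 * (j + 1) by ring] using h2per 0 (j + 1)
    · simpa [show 2 * (2 * j) + 2 = 2 * (2 * j + 1) by ring] using h2per 0 (2 * j + 1)
  · have := hper 0
    rw [show ((2 * j + 1 : ℕ) : ZMod n) = (2 * j : ℕ) + 1 by push_cast; ring, ← add_assoc,
      ← h2per 0 j] at this
    exact halt _ this

lemma IsBicliqueColoring.not_hasNearbyBoundary [NeZero n] (hn : 3 * k + 2 ≤ n) (y : ZMod n)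
    (hy : IsBoundary c y) :
    ¬ HasNearbyBoundary c k y := by
  intro hyk
  have hanti := hc.apply_add_natCast_ne_of_forall_hasNearbyBoundary hn
    (by obtain ⟨r, _, _⟩ := hyk; omega) (hc.forall_hasNearbyBoundary hn hy hyk)
  rcases hn.lt_or_eq with hlt | heq
  · exact hc.not_hasNearbyBoundary_of_forall_apply_add_natCast_ne hlt hanti y hy hyk
  · obtain ⟨x, hx⟩ := hc.exists_apply_add_natCast_eq (by obtain ⟨r, _, _⟩ := hyk; omega) heq.symm
    exact hanti x hx

lemma IsBicliqueColoring.le_mul_card_isBoundary [NeZero n] (hn : 3 * k + 2 ≤ n) (hk : 1 ≤ k) :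
    n ≤ (k + 1) * #{y | IsBoundary c y} := by
  calc n = ∑ _x : ZMod n, 1 := by simp
    _ ≤ ∑ x, #{j ∈ range (k + 1) | x + ((j : ℕ) : ZMod n) ∈ ({y | IsBoundary c y} : Finset _)} := by
      refine sum_le_sum fun x _ => card_pos.mpr ?_
      obtain ⟨j, hjk, hj⟩ := hc.exists_isBoundary_le hn hk x
      exact ⟨j, by simpa [Nat.lt_succ_iff] using ⟨hjk, hj⟩⟩
    _ = (k + 1) * #{y | IsBoundary c y} := by rw [sum_card_filter_add_mem, card_range]

lemma IsBicliqueColoring.mul_card_isBoundary_le [NeZero n] (hn : 3 * k + 2 ≤ n) :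
    k * #{y | IsBoundary c y} ≤ n := by
  calc k * #{y | IsBoundary c y}
      = ∑ x, #{j ∈ range k | x + ((j : ℕ) : ZMod n) ∈ ({y | IsBoundary c y} : Finset _)} := by
        rw [sum_card_filter_add_mem, card_range]
    _ ≤ ∑ _x : ZMod n, 1 := by
      refine sum_le_sum fun x _ => card_le_one.mpr ?_
      have hfar {i j : ℕ} (hij : i < j) (hj : j < k) (hi : IsBoundary c (x + i))
          (hj' : IsBoundary c (x + j)) : False :=
        hc.not_hasNearbyBoundary hn _ hi ⟨j - i, by omega, by omega, by
          rwa [ZMod.add_natCast_add_natCast, Nat.add_sub_cancel' hij.le]⟩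
      simp only [mem_filter, mem_range, mem_univ, true_and]
      intro i ⟨hik, hi⟩ j ⟨hjk, hj⟩
      by_contra hne
      rcases Nat.lt_or_gt_of_ne hne with h | h
      exacts [hfar h hjk hi hj, hfar h hik hj hi]
    _ = n := by simp

lemma IsBicliqueColoring.exists_even_mul_le_le_mul [NeZero n] (hn : 3 * k + 2 ≤ n) (hk : 1 ≤ k) :
    ∃ m, 2 ≤ m ∧ Even m ∧ m * k ≤ n ∧ n ≤ m * (k + 1) := by
  have hle := hc.le_mul_card_isBoundary hn hk
  have hge := hc.mul_card_isBoundary_le hn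
  obtain ⟨t, ht⟩ := even_card_isBoundary c
  refine ⟨#{y | IsBoundary c y}, ?_, ⟨t, ht⟩, by linarith, by linarith⟩
  rcases Nat.eq_zero_or_pos t with rfl | ht0
  · simp only [ht, add_zero, mul_zero] at hle; omega
  · omega

end BicliqueColoring

section BlockColoring
variable {n k m : ℕ}

def blockColor (n m : ℕ) (x : ZMod n) : Fin 2 := ⟨x.val * m / n % 2, Nat.mod_lt _ two_pos⟩

lemma mul_div_le_mul_div_add_one (hn : 0 < n) (hkm : k * m ≤ n) {p q : ℕ} (h : p ≤ q + k) :
    p * m / n ≤ q * m / n + 1 :=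
  (Nat.div_le_div_right (by nlinarith)).trans_eq (Nat.add_div_right _ hn)

lemma le_add_of_mul_div_eq (hn : 0 < n) (hnk : n ≤ m * (k + 1)) {p q : ℕ}
    (h : p * m / n = q * m / n) : p ≤ q + k := by
  by_contra! hlt
  have : (q * m + n) / n ≤ p * m / n := Nat.div_le_div_right (by nlinarith)
  rw [Nat.add_div_right _ hn] at this
  omega

variable [NeZero n]

lemma val_mul_div_eq_of_adj_of_blockColor_eq (hkm : k * m ≤ n) (hnk : n ≤ m * (k + 1))
    (hm : Even m) {u v : ZMod n}
    (huv : (cyclePower n k).Adj u v) (hcol : blockColor n m u = blockColor n m v) :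
    u.val * m / n = v.val * m / n := by
  have hn := NeZero.pos n
  have hpar : u.val * m / n % 2 = v.val * m / n % 2 := congrArg Fin.val hcol
  have hlt (x : ZMod n) : x.val * m / n < m := Nat.div_lt_of_lt_mul (by nlinarith [x.val_lt])
  have hwrap (p q : ℕ) (h : p + n ≤ q + k) : p * m / n + m ≤ q * m / n + 1 := by
    simpa [add_mul, Nat.add_mul_div_left _ _ hn] using mul_div_le_mul_div_add_one hn hkm h
  have hm2 : m % 2 = 0 := Nat.even_iff.mp hm
  rw [cyclePower_adj_iff_val] at huv
  rcases huv.2 with ⟨h1, h2⟩ | h | h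
  · have := mul_div_le_mul_div_add_one hn hkm h1
    have := mul_div_le_mul_div_add_one hn hkm h2
    omega
  -- An edge across `0` joins the first block to the last one, whose parities differ.
  · have := hwrap u.val v.val (by omega)
    have := hlt v
    generalize u.val * m / n = I, v.val * m / n = J at *
    omega
  · have := hwrap v.val u.val (by omega)
    have := hlt u
    generalize u.val * m / n = I, v.val * m / n = J at *
    omega

lemma cyclePower_adj_of_val_mul_div_eq (hnk : n ≤ m * (k + 1)) {u v : ZMod n} (hne : u ≠ v)
    (h : u.val * m / n = v.val * m / n) : (cyclePower n k).Adj u v := by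
  have := le_add_of_mul_div_eq (NeZero.pos n) hnk h
  have := le_add_of_mul_div_eq (NeZero.pos n) hnk h.symm
  rw [cyclePower_adj_iff_val]
  exact ⟨fun h => hne (ZMod.val_injective n h), by omega⟩

lemma isBicliqueColoring_blockColor (hn : 3 * k + 2 ≤ n) (hm : Even m) (hkm : k * m ≤ n)
    (hnk : n ≤ m * (k + 1)) : IsBicliqueColoring (cyclePower n k) (blockColor n m) := by
  rintro S hS ⟨γ, hγ⟩
  obtain ⟨hcb, ⟨u, hu, v, hv, huv⟩, -⟩ := id hS
  have hidx {z w : ZMod n} (hz : z ∈ S) (hw : w ∈ S) (hzw : (cyclePower n k).Adj z w) :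
      z.val * m / n = w.val * m / n :=
    val_mul_div_eq_of_adj_of_blockColor_eq hkm hnk hm hzw ((hγ z hz).trans (hγ w hw).symm)
  have hsame (z : ZMod n) (hz : z ∈ S) : z.val * m / n = u.val * m / n := by
    by_cases hzu : (cyclePower n k).Adj z u
    · exact hidx hz hu hzu
    · have hzv := (hcb.adj_iff_not_adj hz hu hv huv).not_left.mp hzu
      exact (hidx hz hv hzv).trans (hidx hu hv huv).symm
  have hclq : (cyclePower n k).IsClique S := fun z hz w hw hne =>
    cyclePower_adj_of_val_mul_div_eq hnk hne ((hsame z hz).trans (hsame w hw).symm)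
  exact cyclePower_not_isBiclique_pair hn huv (hcb.eq_pair_of_isClique hclq hu hv huv ▸ hS)

end BlockColoring

lemma exists_mul_add_mul_even_iff {n k : ℕ} :
    (∃ a b : ℕ, n = a * k + b * (k + 1) ∧ 2 ≤ a + b ∧ Even (a + b)) ↔
      ∃ m, 2 ≤ m ∧ Even m ∧ m * k ≤ n ∧ n ≤ m * (k + 1) := by
  constructor
  · rintro ⟨a, b, rfl, h2, he⟩
    exact ⟨a + b, h2, he, by nlinarith, by nlinarith⟩
  · rintro ⟨m, h2, he, hlo, hhi⟩
    have hsum : m * (k + 1) - n + (n - m * k) = m := by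
      rw [mul_add_one] at hhi ⊢; omega
    refine ⟨m * (k + 1) - n, n - m * k, ?_, hsum.symm ▸ h2, hsum.symm ▸ he⟩
    zify [hlo, hhi]
    ring

/-- `C_n^k` with `n ≥ 3k + 2` and `k ≥ 1` has biclique-chromatic number 2 iff
`n = a·k + b·(k + 1)` for naturals `a`, `b` with `a + b ≥ 2` even. -/
theorem stmt_16 (n k : ℕ) (hk : 1 ≤ k) (h : 3 * k + 2 ≤ n) :
    bicliqueChromaticNumber (cyclePower n k) = 2 ↔
      ∃ a b : ℕ, n = a * k + b * (k + 1) ∧ 2 ≤ a + b ∧ Even (a + b) := by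
  have : NeZero n := ⟨by omega⟩
  have hP3 := cyclePower_isBiclique_p3 (0 : ZMod n) (s := 1) (d := k + 1) hk (by omega) le_rfl
    (by omega)
  rw [bicliqueChromaticNumber_eq_two_iff (not_bicliqueColorable_one hP3),
    exists_mul_add_mul_even_iff]
  constructor
  · rintro ⟨c, hc⟩
    exact IsBicliqueColoring.exists_even_mul_le_le_mul hc h hk
  · rintro ⟨m, -, hm, hkm, hnk⟩
    exact ⟨blockColor n m, isBicliqueColoring_blockColor h hm (by linarith) hnk⟩
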